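/- arXiv:2603.15145 — 2 statements merged into one kernel-verified Lean document; each statement's English description precedes it below -/
import Mathlib

section
/- The total surface area of the oloid obtained by integrating the surface area element over both sheets equals 4π: 2·∫₀¹ ∫_{−2π/3}^{2π/3} ‖(∂P/∂m) × (∂P/∂t)‖ dt dm = 4π, where P(m,t) = (−1/2 + m/(cos t + 1) + (m−1)cos t, (1−m)sin t, m√(2cos t + 1)/(cos t + 1)). -/
open Real Matrix

/-- Parametrization of the upper sheet of the oloid surface. -/
noncomputable def oloidP (m t : ℝ) : Fin 3 → ℝ :=
  ![-1/2 + m / (Real.cos t + 1) + (m - 1) * Real.cos t,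
    (1 - m) * Real.sin t,
    m * Real.sqrt (2 * Real.cos t + 1) / (Real.cos t + 1)]

/-- Euclidean norm of a vector in `Fin 3 → ℝ`. -/
noncomputable def euclNorm (v : Fin 3 → ℝ) : ℝ :=
  ‖((WithLp.equiv 2 (Fin 3 → ℝ)).symm v : EuclideanSpace ℝ (Fin 3))‖

/-! The oloid is a developable ruled surface: with `c = cos t`, `s = sin t` and `r = √(2c + 1)`,
`∂ₘP × ∂ₜP = (2c + 1 - 3mc) / (r (c + 1)) • (-c, s, r)`, so the area element is linear in `m`.
In terms of `u = cos (t / 2)` it equals `(4 - 6m) u / √(4u² - 1) + (3m - 1) / (u √(4u² - 1))`,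
the `t`-derivative of `(4 - 6m) arcsin (2 sin (t/2) / √3) + (6m - 2) arcsin (tan (t/2) / √3)`,
which runs from `-π` to `π` over `[-2π/3, 2π/3]`. Every inner integral is therefore `2π`. -/

open Set MeasureTheory intervalIntegral

lemma euclNorm_eq_sqrt (v : Fin 3 → ℝ) : euclNorm v = √(v 0 ^ 2 + v 1 ^ 2 + v 2 ^ 2) := by
  simp [euclNorm, EuclideanSpace.norm_eq, Fin.sum_univ_three]

lemma euclNorm_smul (a : ℝ) (v : Fin 3 → ℝ) : euclNorm (a • v) = |a| * euclNorm v := by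
  simp [euclNorm, norm_smul]

lemma one_half_lt_cos_half {t : ℝ} (ht : |t| < 2 * π / 3) : 1 / 2 < cos (t / 2) := by
  rw [← cos_pi_div_three, ← cos_abs (t / 2)]
  refine cos_lt_cos_of_nonneg_of_le_pi (abs_nonneg _) (by linarith [pi_pos]) ?_
  rw [abs_div, abs_two]; linarith

lemma one_half_le_cos_half {t : ℝ} (ht : |t| ≤ 2 * π / 3) : 1 / 2 ≤ cos (t / 2) := by
  rw [← cos_pi_div_three, ← cos_abs (t / 2)]
  refine cos_le_cos_of_nonneg_of_le_pi (abs_nonneg _) (by linarith [pi_pos]) ?_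
  rw [abs_div, abs_two]; linarith

lemma cross_oloid_derivs {𝕜 : Type*} [Field 𝕜] {m c s r : 𝕜} (hs : s ^ 2 = 1 - c ^ 2)
    (hr : r ^ 2 = 2 * c + 1) (hr0 : r ≠ 0) (hc : c + 1 ≠ 0) :
    ![1 / (c + 1) + c, -s, r / (c + 1)] ⨯₃
        ![m * s / (c + 1) ^ 2 + (1 - m) * s, (1 - m) * c, m * s * c / (r * (c + 1) ^ 2)] =
      ((2 * c + 1 - 3 * m * c) / (r * (c + 1))) • ![-c, s, r] := by
  ext i
  fin_cases i <;> simp [cross_apply] <;> field_simp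
  · linear_combination (-c * m) * hs - c * (c + 1) * (1 - m) * hr
  · linear_combination s * (m + (c + 1) ^ 2 * (1 - m)) * hr
  · linear_combination (m + (c + 1) ^ 2 * (1 - m)) * hs

lemma hasDerivAt_oloidP_fst (m t : ℝ) :
    HasDerivAt (fun m' => oloidP m' t)
      ![1 / (cos t + 1) + cos t, -sin t, √(2 * cos t + 1) / (cos t + 1)] m := by
  rw [hasDerivAt_pi]
  intro i
  fin_cases i
  · exact (((hasDerivAt_id m).div_const (cos t + 1)).const_add (-1 / 2)).add
      (((hasDerivAt_id m).sub_const 1).mul_const (cos t)) |>.congr_deriv (by simp)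
  · simpa [oloidP] using ((hasDerivAt_id m).const_sub 1).mul_const (sin t)
  · simpa [oloidP] using ((hasDerivAt_id m).mul_const √(2 * cos t + 1)).div_const (cos t + 1)

lemma hasDerivAt_oloidP_snd (m : ℝ) {t : ℝ} (ht : 0 < 2 * cos t + 1) :
    HasDerivAt (fun t' => oloidP m t')
      ![m * sin t / (cos t + 1) ^ 2 + (1 - m) * sin t, (1 - m) * cos t,
        m * sin t * cos t / (√(2 * cos t + 1) * (cos t + 1) ^ 2)] t := by
  have hc : cos t + 1 ≠ 0 := by linarith [neg_one_le_cos t]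
  have hr : √(2 * cos t + 1) ^ 2 = 2 * cos t + 1 := sq_sqrt ht.le
  rw [hasDerivAt_pi]
  intro i
  fin_cases i
  · refine (((hasDerivAt_const t m).div ((hasDerivAt_cos t).add_const 1) hc).const_add (-1 / 2)
      |>.add ((hasDerivAt_cos t).const_mul (m - 1))).congr_deriv ?_
    simp
    ring
  · simpa [oloidP] using (hasDerivAt_sin t).const_mul (1 - m)
  · have hsqrt := ((((hasDerivAt_cos t).const_mul 2).add_const 1).sqrt ht.ne').const_mul m
    refine (hsqrt.div ((hasDerivAt_cos t).add_const 1) hc).congr_deriv ?_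
    simp
    field_simp
    linear_combination m * sin t * hr

noncomputable def oloidAreaElement (m t : ℝ) : ℝ :=
  euclNorm ((deriv (fun m' => oloidP m' t) m) ⨯₃ (deriv (fun t' => oloidP m t') t))

lemma oloidAreaElement_eq {m t : ℝ} (hm : m ∈ Icc (0 : ℝ) 1) (ht : |t| < 2 * π / 3) :
    oloidAreaElement m t =
      ((4 - 6 * m) * cos (t / 2) ^ 2 + (3 * m - 1)) /
        (cos (t / 2) * √(4 * cos (t / 2) ^ 2 - 1)) := by
  have hu := one_half_lt_cos_half ht
  have hcos : cos t = 2 * cos (t / 2) ^ 2 - 1 := by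
    rw [cos_sq, mul_div_cancel₀ t two_ne_zero]; ring
  have hr : 0 < 2 * cos t + 1 := by nlinarith
  have hc : 0 < cos t + 1 := by nlinarith
  have hK : 0 ≤ 2 * cos t + 1 - 3 * m * cos t := by nlinarith [cos_le_one t, hm.1, hm.2]
  rw [oloidAreaElement, (hasDerivAt_oloidP_fst m t).deriv, (hasDerivAt_oloidP_snd m hr).deriv,
    cross_oloid_derivs (sin_sq t) (sq_sqrt hr.le) (sqrt_pos.2 hr).ne' hc.ne', euclNorm_smul,
    euclNorm_eq_sqrt]
  simp only [Fin.isValue, cons_val_zero, cons_val_one, cons_val_two, head_cons, tail_cons, even_two,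
    Even.neg_pow, cos_sq_add_sin_sq, sq_sqrt hr.le]
  rw [abs_of_nonneg (div_nonneg hK (mul_pos (sqrt_pos.2 hr) hc).le), hcos]
  set u := cos (t / 2)
  have h4 : √(1 + (2 * (2 * u ^ 2 - 1) + 1)) = 2 * u := by
    rw [show 1 + (2 * (2 * u ^ 2 - 1) + 1) = (2 * u) ^ 2 by ring, sqrt_sq (by linarith)]
  rw [h4, show 2 * (2 * u ^ 2 - 1) + 1 = 4 * u ^ 2 - 1 by ring]
  field_simp
  ring

lemma hasDerivAt_arcsin_two_mul_sin_div_sqrt_three {x : ℝ} (hx : 1 < 4 * cos x ^ 2) :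
    HasDerivAt (fun x => arcsin (2 * sin x / √3)) (2 * cos x / √(4 * cos x ^ 2 - 1)) x := by
  have harg : 1 - (2 * sin x / √3) ^ 2 = (4 * cos x ^ 2 - 1) / 3 := by
    rw [div_pow, sq_sqrt zero_le_three, mul_pow, sin_sq]; ring
  have hne : ∀ a : ℝ, a ^ 2 = 1 → 2 * sin x / √3 ≠ a := by
    rintro a ha rfl; rw [ha] at harg; linarith
  refine ((hasDerivAt_arcsin (hne (-1) (by norm_num)) (hne 1 (one_pow 2))).comp x
    (((hasDerivAt_sin x).const_mul 2).div_const √3)).congr_deriv ?_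
  rw [harg, sqrt_div' _ zero_le_three]
  field_simp

lemma hasDerivAt_arcsin_tan_div_sqrt_three {x : ℝ} (hx : 1 / 2 < cos x) :
    HasDerivAt (fun x => arcsin (tan x / √3)) (1 / (cos x * √(4 * cos x ^ 2 - 1))) x := by
  have harg : 1 - (tan x / √3) ^ 2 = (4 * cos x ^ 2 - 1) / (3 * cos x ^ 2) := by
    rw [div_pow, sq_sqrt zero_le_three, tan_eq_sin_div_cos, div_pow, sin_sq]
    field_simp; ring
  have hne : ∀ a : ℝ, a ^ 2 = 1 → tan x / √3 ≠ a := by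
    rintro a ha rfl; rw [ha] at harg
    have : 0 < (4 * cos x ^ 2 - 1) / (3 * cos x ^ 2) := by apply div_pos <;> nlinarith
    linarith
  refine ((hasDerivAt_arcsin (hne (-1) (by norm_num)) (hne 1 (one_pow 2))).comp x
    ((hasDerivAt_tan (by positivity)).div_const √3)).congr_deriv ?_
  rw [harg, sqrt_div' _ (by positivity), sqrt_mul' _ (by positivity), sqrt_sq (by positivity)]
  field_simp

noncomputable def oloidPrimitive (m t : ℝ) : ℝ :=
  (4 - 6 * m) * arcsin (2 * sin (t / 2) / √3) + (6 * m - 2) * arcsin (tan (t / 2) / √3)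

lemma hasDerivAt_oloidPrimitive (m : ℝ) {t : ℝ} (ht : 1 / 2 < cos (t / 2)) :
    HasDerivAt (oloidPrimitive m)
      (((4 - 6 * m) * cos (t / 2) ^ 2 + (3 * m - 1)) / (cos (t / 2) * √(4 * cos (t / 2) ^ 2 - 1)))
      t := by
  have hhalf := (hasDerivAt_id' t).div_const 2
  have hsin := (hasDerivAt_arcsin_two_mul_sin_div_sqrt_three (by nlinarith)).comp t hhalf
  have htan := (hasDerivAt_arcsin_tan_div_sqrt_three ht).comp t hhalf
  refine ((hsin.const_mul (4 - 6 * m)).add (htan.const_mul (6 * m - 2))).congr_deriv ?_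
  have hw : 0 < √(4 * cos (t / 2) ^ 2 - 1) := sqrt_pos.2 (by nlinarith)
  field_simp
  ring

lemma oloidPrimitive_neg (m t : ℝ) : oloidPrimitive m (-t) = -oloidPrimitive m t := by
  simp only [oloidPrimitive, neg_div, sin_neg, tan_neg, mul_neg, arcsin_neg]
  ring

lemma oloidPrimitive_two_pi_div_three (m : ℝ) : oloidPrimitive m (2 * π / 3) = π := by
  have h3 : √3 ≠ 0 := by positivity
  rw [oloidPrimitive, show 2 * π / 3 / 2 = π / 3 by ring, sin_pi_div_three, tan_pi_div_three,
    mul_div_cancel₀ _ two_ne_zero, div_self h3, arcsin_one]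
  ring

lemma continuousOn_oloidPrimitive (m : ℝ) :
    ContinuousOn (oloidPrimitive m) (Icc (-(2 * π / 3)) (2 * π / 3)) := by
  have htan : ContinuousOn (fun t => tan (t / 2)) (Icc (-(2 * π / 3)) (2 * π / 3)) :=
    continuousOn_tan.comp (by fun_prop) fun t ht =>
      ((one_half_le_cos_half (abs_le.2 ht)).trans_lt' one_half_pos).ne'
  exact (continuous_const.mul (continuous_arcsin.comp (by fun_prop))).continuousOn.add
    (continuousOn_const.mul (continuous_arcsin.comp_continuousOn (htan.div_const _)))

lemma integral_oloidAreaElement {m : ℝ} (hm : m ∈ Icc (0 : ℝ) 1) :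
    ∫ t in (-(2 * π / 3))..(2 * π / 3), oloidAreaElement m t = 2 * π := by
  have hab : -(2 * π / 3) ≤ 2 * π / 3 := by linarith [pi_pos]
  have hderiv : ∀ t ∈ Ioo (-(2 * π / 3)) (2 * π / 3),
      HasDerivAt (oloidPrimitive m) (oloidAreaElement m t) t := fun t ht => by
    rw [oloidAreaElement_eq hm (abs_lt.2 ht)]
    exact hasDerivAt_oloidPrimitive m (one_half_lt_cos_half (abs_lt.2 ht))
  -- the area element is singular at both endpoints; it is integrable as a nonnegative derivative
  have hint : IntervalIntegrable (oloidAreaElement m) volume (-(2 * π / 3)) (2 * π / 3) :=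
    (intervalIntegrable_iff_integrableOn_Ioc_of_le hab).2 <|
      integrableOn_deriv_of_nonneg (continuousOn_oloidPrimitive m) hderiv fun _ _ => norm_nonneg _
  rw [integral_eq_sub_of_hasDerivAt_of_le hab (continuousOn_oloidPrimitive m) hderiv hint,
    oloidPrimitive_neg, oloidPrimitive_two_pi_div_three]
  ring

theorem oloid_surface_area :
    2 * ∫ m in (0:ℝ)..1, ∫ t in (-(2*π/3))..(2*π/3),
        euclNorm ((deriv (fun m' => oloidP m' t) m) ⨯₃ (deriv (fun t' => oloidP m t') t)) =
      4 * π := by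
  change 2 * ∫ m in (0:ℝ)..1, ∫ t in (-(2*π/3))..(2*π/3), oloidAreaElement m t = 4 * π
  have hinner : EqOn (fun m => ∫ t in (-(2*π/3))..(2*π/3), oloidAreaElement m t)
      (fun _ => 2 * π) (uIcc 0 1) := fun m hm => integral_oloidAreaElement (by rwa [uIcc_of_le zero_le_one] at hm)
  rw [integral_congr hinner, intervalIntegral.integral_const, sub_zero, one_smul]
  ring
end

section
/- For every t ∈ (−2π/3, 2π/3), the inner m-integral of the I_xx surface integrand satisfies: ∫₀¹ cos t·((3m−2)cos t − 1)·(m/(cos t + 1) + (m−1)cos t − 1/2)·(m²(2 cos t + 1)/(cos t + 1)² + (m−1)² sin²t) / (cos²(t/2)·√(2 cos t + 1)) dm = −cos²t·(−2510 cos t + 547 cos 2t + 1129 cos 3t + 648 cos 4t + 181 cos 5t + 21 cos 6t − 1744) / (15360 cos⁸(t/2)·√(2 cos t + 1)). -/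
/-!
Put `c = cos t`. The integrand is a quartic polynomial in `m` divided by a factor that does not
depend on `m`, so Boole's five-point rule integrates it exactly over `[0, 1]`. On the right-hand
side `cos (k t)` is the Chebyshev polynomial `T k` evaluated at `c` and `cos² (t / 2) = (1 + c) / 2`,
so the identity becomes one between rational functions of `c`, valid as long as `c + 1` and
`2 c + 1` are positive.
-/

open Real Polynomial Chebyshev

theorem integral_zero_one_eval_eq_boole {p : ℝ[X]} (hp : p.natDegree ≤ 5) :
    ∫ x in (0:ℝ)..1, p.eval x =
      (7 * p.eval 0 + 32 * p.eval (1/4) + 12 * p.eval (1/2) + 32 * p.eval (3/4) +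
        7 * p.eval 1) / 90 := by
  rw [p.as_sum_range' 6 (by omega)]
  simp only [eval_finsetSum, eval_monomial]
  rw [intervalIntegral.integral_finsetSum fun i _ =>
    (by fun_prop : Continuous fun x : ℝ => p.coeff i * x ^ i).intervalIntegrable _ _]
  simp only [intervalIntegral.integral_const_mul, integral_pow, Finset.sum_range_succ,
    Finset.sum_range_zero]
  norm_num
  ring

theorem integral_oloid_Ixx_numerator (c : ℝ) (hc : c + 1 ≠ 0) :
    ∫ m in (0:ℝ)..1, c * ((3*m - 2) * c - 1) * (m / (c + 1) + (m - 1) * c - 1/2) *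
        (m^2 * (2*c + 1) / (c + 1)^2 + (m - 1)^2 * (1 - c^2)) =
      -(c^2 * (42*c^6 + 181*c^5 + 261*c^4 + 56*c^3 - 232*c^2 - 312*c - 104)) /
        (120 * (c + 1)^3) := by
  let p : ℝ[X] := C c * ((3 * X - 2) * C c - 1) * (X * C (c + 1)⁻¹ + (X - 1) * C c - C (1/2)) *
    (X ^ 2 * C ((2*c + 1) / (c + 1)^2) + (X - 1)^2 * C (1 - c^2))
  have hp : p.natDegree ≤ 5 := by dsimp only [p]; compute_degree!
  have heval (m : ℝ) : p.eval m = c * ((3*m - 2) * c - 1) * (m / (c + 1) + (m - 1) * c - 1/2) *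
      (m^2 * (2*c + 1) / (c + 1)^2 + (m - 1)^2 * (1 - c^2)) := by
    simp only [p, eval_mul, eval_add, eval_sub, eval_pow, eval_C, eval_X, eval_one, eval_ofNat]
    ring
  simp_rw [← heval, integral_zero_one_eval_eq_boole hp, heval]
  field_simp
  ring

theorem cos_ofNat_mul_eq_eval_T (n : ℕ) [n.AtLeastTwo] (t : ℝ) :
    cos (ofNat(n) * t) = (T ℝ ofNat(n)).eval (cos t) := by
  exact_mod_cast (T_real_cos t (OfNat.ofNat n)).symm

theorem oloid_Ixx_cos_combination (t : ℝ) :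
    -2510 * cos t + 547 * cos (2*t) + 1129 * cos (3*t) + 648 * cos (4*t) +
        181 * cos (5*t) + 21 * cos (6*t) - 1744 =
      16 * (42 * cos t ^ 6 + 181 * cos t ^ 5 + 261 * cos t ^ 4 + 56 * cos t ^ 3 -
        232 * cos t ^ 2 - 312 * cos t - 104) := by
  simp only [cos_ofNat_mul_eq_eval_T]
  norm_num [T_eq ℝ 6, T_eq ℝ 5, T_eq ℝ 4, T_eq ℝ 3, T_two]
  ring

theorem cos_half_sq (t : ℝ) : cos (t / 2) ^ 2 = (1 + cos t) / 2 := by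
  rw [cos_sq, mul_div_cancel₀ t two_ne_zero]
  ring

theorem neg_half_lt_cos_of_abs_lt {t : ℝ} (ht : |t| < 2 * π / 3) : -(1/2) < cos t := by
  have h : cos (2 * π / 3) = -(1/2) := by
    rw [show 2 * π / 3 = π - π / 3 by ring, cos_pi_sub, cos_pi_div_three]
  rw [← h, ← cos_abs t]
  exact cos_lt_cos_of_nonneg_of_le_pi (abs_nonneg t) (by linarith [pi_pos]) ht

theorem oloid_Ixx_inner_m_integral :
    ∀ t ∈ Set.Ioo (-(2*π/3)) (2*π/3),
      ∫ m in (0:ℝ)..1,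
          Real.cos t * ((3*m - 2) * Real.cos t - 1) *
              (m / (Real.cos t + 1) + (m - 1) * Real.cos t - 1/2) *
              (m^2 * (2 * Real.cos t + 1) / (Real.cos t + 1)^2 +
                (m - 1)^2 * Real.sin t ^ 2) /
            (Real.cos (t/2) ^ 2 * Real.sqrt (2 * Real.cos t + 1)) =
        -(Real.cos t ^ 2 *
            (-2510 * Real.cos t + 547 * Real.cos (2*t) + 1129 * Real.cos (3*t) +
              648 * Real.cos (4*t) + 181 * Real.cos (5*t) + 21 * Real.cos (6*t) - 1744)) /
          (15360 * Real.cos (t/2) ^ 8 * Real.sqrt (2 * Real.cos t + 1)) := by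
  rintro t ⟨hlo, hhi⟩
  have hc : -(1/2) < cos t := neg_half_lt_cos_of_abs_lt (abs_lt.2 ⟨hlo, hhi⟩)
  have hsqrt : 0 < √(2 * cos t + 1) := sqrt_pos.2 (by linarith)
  simp_rw [sin_sq, intervalIntegral.integral_div]
  rw [integral_oloid_Ixx_numerator _ (by linarith), oloid_Ixx_cos_combination,
    show cos (t / 2) ^ 8 = (cos (t / 2) ^ 2) ^ 4 by ring, cos_half_sq]
  field_simp
  ring
end
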